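/- Let M = (S, f, s₀, F) be a deterministic Büchi automaton over Bool in which every state is reachable from s₀. Then μ(L(M)) = 0 if and only if F ∩ g = ∅ for every leaf connected component g of M. -/

import Mathlib

open MeasureTheory Filter

/-- The fair-coin product probability measure on Cantor space `ℕ → Bool`,
constructed as the pushforward of Lebesgue measure on `[0,1)` under binary expansion. -/
noncomputable def mu : Measure (ℕ → Bool) :=
  Measure.map (fun x n => decide (⌊x * 2 ^ (n + 1)⌋ % 2 = 1))
    (volume.restrict (Set.Ico (0 : ℝ) 1))

/-- Action of a word on a state of an automaton. -/
def act {S A : Type*} (f : S → A → S) (s : S) (w : List A) : S := w.foldl f s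

/-- The run of a sequence `X` on the machine `(S, f, s₀)`. -/
def run {S : Type*} (f : S → Bool → S) (s₀ : S) (X : ℕ → Bool) : ℕ → S
  | 0 => s₀
  | n + 1 => f (run f s₀ X n) (X n)

/-- `t` is reachable from `s`. -/
def Reach {S : Type*} (f : S → Bool → S) (s t : S) : Prop := ∃ w : List Bool, act f s w = t

/-- The connected component of a state `s`. -/
def component {S : Type*} (f : S → Bool → S) (s : S) : Set S :=
  {t | Reach f s t ∧ Reach f t s}

/-- `g` is a leaf connected component. -/
def IsLeafComponent {S : Type*} (f : S → Bool → S) (g : Set S) : Prop :=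
  (∃ s, g = component f s) ∧ ∀ s ∈ g, ∀ t, Reach f s t → Reach f t s

/-- The word `w` occurs as a subword of the sequence `X`. -/
def Occurs (w : List Bool) (X : ℕ → Bool) : Prop :=
  ∃ n, ∀ k < w.length, X (n + k) = w.getD k false

/-- `X` is disjunctive: every word occurs in `X` as a subword. -/
def Disjunctive (X : ℕ → Bool) : Prop := ∀ w : List Bool, Occurs w X

/-- The word `w` is a prefix of the sequence `X`. -/
def IsPrefixOfSeq (w : List Bool) (X : ℕ → Bool) : Prop :=
  ∀ k < w.length, X k = w.getD k false

/-- `[L]`: the set of sequences having some prefix in the language `L`. -/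
def cyl (L : Set (List Bool)) : Set (ℕ → Bool) := {X | ∃ w ∈ L, IsPrefixOfSeq w X}

/-- `I(X)`: the set of states visited infinitely often by the run of `X`. -/
def InfOcc {S : Type*} (f : S → Bool → S) (s₀ : S) (X : ℕ → Bool) : Set S :=
  {s | ∃ᶠ n in atTop, run f s₀ X n = s}

/-- `X` is accepted by the deterministic Büchi automaton `(S, f, s₀, F)`. -/
def BuchiAccepts {S : Type*} (f : S → Bool → S) (s₀ : S) (F : Set S) (X : ℕ → Bool) : Prop :=
  ∃ᶠ n in atTop, run f s₀ X n ∈ F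

/-- A language is regular if it is accepted by a DFA with finitely many states. -/
def Regular {A : Type} (L : Set (List A)) : Prop :=
  ∃ (S : Type) (_ : Fintype S) (f : S → A → S) (s₀ : S) (F : Set S),
    L = {w | act f s₀ w ∈ F}

/-- The convolution of two words. -/
def conv (x i : List Bool) : List (Option Bool × Option Bool) :=
  (List.range (max x.length i.length)).map (fun k => (x[k]?, i[k]?))

/-- `(I, U)` is an automatic family. -/
def IsAutomaticFamily (I : Set (List Bool)) (U : List Bool → Set (List Bool)) : Prop :=
  Regular I ∧ Regular {c | ∃ i ∈ I, ∃ x ∈ U i, c = conv x i}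

/-- `(I, U)` is an automatic randomness test (ART). -/
def IsART (I : Set (List Bool)) (U : List Bool → Set (List Bool)) : Prop :=
  IsAutomaticFamily I U ∧ ∀ ε : ENNReal, 0 < ε → ∃ i ∈ I, mu (cyl (U i)) ≤ ε

/-- `(I, U)` is a Martin-Löf automatic randomness test (MART). -/
def IsMART (I : Set (List Bool)) (U : List Bool → Set (List Bool)) : Prop :=
  IsAutomaticFamily I U ∧ I.Infinite ∧
    ∀ i ∈ I, mu (cyl (U i)) ≤ (2 : ENNReal) ^ (-(i.length : ℤ))

/-- The covering region `F(I, U)` of a test. -/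
def coverRegion (I : Set (List Bool)) (U : List Bool → Set (List Bool)) : Set (ℕ → Bool) :=
  ⋂ i ∈ I, cyl (U i)

/-!
Under `mu` every word `w` occurs infinitely often in almost every sequence: `mu` agrees with the
product of fair coins on the prefix cylinders, which form a generating π-system, so the
occurrences of `w` in pairwise disjoint blocks are independent events of the same positive
probability, and the second Borel–Cantelli lemma applies.

If an accepting state `x` lies in a leaf component `g`, one word leads every state of `g` through
`x`; every sequence that starts with a word leading `s₀` to `x` and contains that word infinitely
often is accepted, and these sequences have positive measure. Conversely, some word drives every
state into a leaf component, which the run can never leave again; after its first occurrence the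
run avoids `F` for good.
-/

open ProbabilityTheory

def binaryValue (v : ℕ → Bool) : ℕ → ℕ
  | 0 => 0
  | n + 1 => 2 * binaryValue v n + (v n).toNat

lemma binaryValue_lt (v : ℕ → Bool) (n : ℕ) : binaryValue v n < 2 ^ n := by
  induction n with
  | zero => simp [binaryValue]
  | succ n ih => cases h : v n <;> simp [binaryValue, h, pow_succ] <;> omega

noncomputable def binaryDigits (x : ℝ) (n : ℕ) : Bool := decide (⌊x * 2 ^ (n + 1)⌋ % 2 = 1)

lemma floor_mul_two_pow_succ_div_two (x : ℝ) (n : ℕ) :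
    ⌊x * 2 ^ (n + 1)⌋ / 2 = ⌊x * 2 ^ n⌋ := by
  have h := Int.floor_div_natCast (x * 2 ^ (n + 1)) 2
  push_cast at h
  rw [← h]
  congr 1
  ring

lemma forall_lt_binaryDigits_eq_iff {x : ℝ} (hx : ⌊x⌋ = 0) (v : ℕ → Bool) (n : ℕ) :
    (∀ k < n, binaryDigits x k = v k) ↔ ⌊x * 2 ^ n⌋ = binaryValue v n := by
  induction n with
  | zero => simpa [binaryValue] using hx
  | succ n ih =>
    have hdiv := floor_mul_two_pow_succ_div_two x n
    rw [Nat.forall_lt_succ_right, ih]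
    simp only [binaryDigits, binaryValue]
    cases v n <;> simp <;> omega

lemma volume_floor_mul_two_pow_eq_inter_Ico {c n : ℕ} (hc : c < 2 ^ n) :
    volume ({x : ℝ | ⌊x * 2 ^ n⌋ = c} ∩ Set.Ico 0 1) = 2⁻¹ ^ n := by
  have h2n : (0 : ℝ) < 2 ^ n := by positivity
  have hc' : (c : ℝ) + 1 ≤ 2 ^ n := by exact_mod_cast hc
  have hset : {x : ℝ | ⌊x * 2 ^ n⌋ = c} ∩ Set.Ico 0 1 =
      Set.Ico ((c : ℝ) / 2 ^ n) ((c + 1) / 2 ^ n) := by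
    ext x
    simp only [Set.mem_inter_iff, Set.mem_ofPred_eq, Set.mem_Ico, Int.floor_eq_iff,
      div_le_iff₀ h2n, lt_div_iff₀ h2n]
    push_cast
    constructor
    · exact fun h => h.1
    · intro h
      refine ⟨h, ?_, ?_⟩ <;> nlinarith
  rw [hset, Real.volume_Ico, ← sub_div, add_sub_cancel_left, one_div,
    ENNReal.ofReal_inv_of_pos h2n, ENNReal.ofReal_pow zero_le_two, ENNReal.ofReal_ofNat,
    ENNReal.inv_pow]

lemma measurable_binaryDigits : Measurable binaryDigits :=
  measurable_pi_lambda _ fun _ =>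
    (measurable_from_top (f := fun z : ℤ => decide (z % 2 = 1))).comp
      (Int.measurable_floor.comp (measurable_id.mul_const _))

lemma mu_eq_map_binaryDigits : mu = (volume.restrict (Set.Ico 0 1)).map binaryDigits := rfl

def prefixCylinder (n : ℕ) (v : ℕ → Bool) : Set (ℕ → Bool) := {X | ∀ k < n, X k = v k}

lemma prefixCylinder_eq_pi (n : ℕ) (v : ℕ → Bool) :
    prefixCylinder n v = Set.pi (Finset.range n : Set ℕ) fun k => {v k} := by
  ext X
  simp [prefixCylinder]

lemma prefixCylinder_zero (v : ℕ → Bool) : prefixCylinder 0 v = Set.univ := by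
  simp [prefixCylinder]

lemma measurableSet_prefixCylinder (n : ℕ) (v : ℕ → Bool) :
    MeasurableSet (prefixCylinder n v) := by
  rw [prefixCylinder_eq_pi]
  exact .pi (Finset.range n).countable_toSet fun _ _ => measurableSet_singleton _

lemma mu_prefixCylinder (n : ℕ) (v : ℕ → Bool) : mu (prefixCylinder n v) = 2⁻¹ ^ n := by
  rw [mu_eq_map_binaryDigits,
    Measure.map_apply measurable_binaryDigits (measurableSet_prefixCylinder n v),
    Measure.restrict_apply' measurableSet_Ico,
    ← volume_floor_mul_two_pow_eq_inter_Ico (binaryValue_lt v n)]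
  congr 1
  ext x
  simp only [Set.mem_inter_iff, Set.mem_preimage, Set.mem_ofPred_eq, Set.mem_Ico,
    and_congr_left_iff]
  intro hx
  exact forall_lt_binaryDigits_eq_iff (Int.floor_eq_zero_iff.mpr hx) v n

lemma prefixCylinder_inter_of_le {n n' : ℕ} {v v' : ℕ → Bool} {X : ℕ → Bool}
    (hX : X ∈ prefixCylinder n v) (hX' : X ∈ prefixCylinder n' v') (h : n ≤ n') :
    prefixCylinder n v ∩ prefixCylinder n' v' = prefixCylinder n' v' := by
  refine Set.inter_eq_right.mpr fun Y hY k hk => ?_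
  rw [← hX k hk, hY k (hk.trans_le h), hX' k (hk.trans_le h)]

lemma isPiSystem_prefixCylinders :
    IsPiSystem (Set.range fun p : ℕ × (ℕ → Bool) => prefixCylinder p.1 p.2) := by
  rintro _ ⟨⟨n, v⟩, rfl⟩ _ ⟨⟨n', v'⟩, rfl⟩ ⟨X, hX, hX'⟩
  rcases le_total n n' with h | h
  · exact ⟨(n', v'), (prefixCylinder_inter_of_le hX hX' h).symm⟩
  · exact ⟨(n, v), (Set.inter_comm _ _ ▸ prefixCylinder_inter_of_le hX' hX h).symm⟩

lemma preimage_eval_eq_iUnion_prefixCylinder (k : ℕ) (b : Bool) :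
    (fun X : ℕ → Bool => X k) ⁻¹' {b} =
      ⋃ w : Fin k → Bool,
        prefixCylinder (k + 1) fun i => if h : i < k then w ⟨i, h⟩ else b := by
  ext X
  simp only [Set.mem_preimage, Set.mem_singleton_iff, Set.mem_iUnion, prefixCylinder,
    Set.mem_ofPred_eq]
  constructor
  · rintro rfl
    refine ⟨fun i => X i, fun i hi => ?_⟩
    split_ifs with h
    · rfl
    · rw [show i = k by omega]
  · rintro ⟨w, hw⟩
    simpa using hw k k.lt_succ_self

lemma generateFrom_prefixCylinders :
    MeasurableSpace.generateFrom
      (Set.range fun p : ℕ × (ℕ → Bool) => prefixCylinder p.1 p.2) = MeasurableSpace.pi := by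
  refine le_antisymm (MeasurableSpace.generateFrom_le ?_) (iSup_le fun k => ?_)
  · rintro _ ⟨p, rfl⟩
    exact measurableSet_prefixCylinder p.1 p.2
  · refine Measurable.comap_le
      (@measurable_to_countable' _ _ _ _ (MeasurableSpace.generateFrom _) _ fun b => ?_)
    rw [preimage_eval_eq_iUnion_prefixCylinder]
    exact .iUnion fun w => MeasurableSpace.measurableSet_generateFrom ⟨(k + 1, _), rfl⟩

noncomputable abbrev coin : Measure Bool := (PMF.uniformOfFintype Bool).toMeasure

lemma coin_singleton (b : Bool) : coin {b} = 2⁻¹ := by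
  rw [PMF.toMeasure_apply_singleton _ _ (measurableSet_singleton b), PMF.uniformOfFintype_apply,
    Fintype.card_bool, Nat.cast_ofNat]

lemma infinitePi_coin_prefixCylinder (n : ℕ) (v : ℕ → Bool) :
    Measure.infinitePi (fun _ => coin) (prefixCylinder n v) = 2⁻¹ ^ n := by
  rw [prefixCylinder_eq_pi,
    Measure.infinitePi_pi (fun _ => coin) fun _ _ => measurableSet_singleton _]
  simp only [coin_singleton, Finset.prod_const, Finset.card_range]

lemma mu_eq_infinitePi : mu = Measure.infinitePi fun _ => coin := by
  refine (ext_of_generate_finite _ generateFrom_prefixCylinders.symm isPiSystem_prefixCylinders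
    ?_ ?_).symm
  · rintro _ ⟨⟨n, v⟩, rfl⟩
    rw [infinitePi_coin_prefixCylinder, mu_prefixCylinder]
  · rw [← prefixCylinder_zero fun _ => false, infinitePi_coin_prefixCylinder, mu_prefixCylinder]

lemma iIndepSet_infinitePi_pi {ι κ : Type*} {X : ι → Type*} [∀ i, MeasurableSpace (X i)]
    (μ : ∀ i, Measure (X i)) [∀ i, IsProbabilityMeasure (μ i)] {B : κ → Finset ι}
    (hB : Pairwise fun j j' => Disjoint (B j) (B j')) {t : ∀ i, Set (X i)}
    (ht : ∀ i, MeasurableSet (t i)) :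
    iIndepSet (fun j => Set.pi (B j : Set ι) t) (Measure.infinitePi μ) := by
  classical
  refine (iIndepSet_iff_meas_biInter fun j => .pi (B j).countable_toSet fun i _ => ht i).mpr
    fun s => ?_
  have hinter : ⋂ j ∈ s, Set.pi (B j : Set ι) t = Set.pi (s.biUnion B : Set ι) t := by
    ext x
    simp only [Set.mem_iInter, Set.mem_pi, Finset.mem_coe, Finset.mem_biUnion]
    grind
  rw [hinter, Measure.infinitePi_pi μ fun i _ => ht i, Finset.prod_biUnion (hB.set_pairwise _)]
  exact Finset.prod_congr rfl fun j _ => (Measure.infinitePi_pi μ fun i _ => ht i).symm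

def OccursAt (w : List Bool) (n : ℕ) (X : ℕ → Bool) : Prop :=
  ∀ k < w.length, X (n + k) = w.getD k false

lemma setOf_occursAt_eq_pi (w : List Bool) (j : ℕ) :
    {X | OccursAt w (j * (w.length + 1)) X} =
      Set.pi (Finset.Ico (j * (w.length + 1)) (j * (w.length + 1) + w.length) : Set ℕ)
        fun i => {w.getD (i % (w.length + 1)) false} := by
  ext X
  simp only [OccursAt, Set.mem_ofPred_eq, Set.mem_pi, Finset.coe_Ico, Set.mem_Ico,
    Set.mem_singleton_iff]
  constructor
  · intro h i ⟨hi, hi'⟩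
    obtain ⟨k, rfl⟩ := Nat.exists_eq_add_of_le hi
    rw [h k (by omega), Nat.mul_add_mod_of_lt (by omega)]
  · intro h k hk
    rw [h _ ⟨by omega, by omega⟩, Nat.mul_add_mod_of_lt (by omega)]

lemma pairwise_disjoint_blocks (L : ℕ) : Pairwise fun j j' =>
    Disjoint (Finset.Ico (j * (L + 1)) (j * (L + 1) + L))
      (Finset.Ico (j' * (L + 1)) (j' * (L + 1) + L)) := by
  refine (pairwise_disjoint_on fun j => Finset.Ico (j * (L + 1)) (j * (L + 1) + L)).mpr
    fun j j' h => Finset.disjoint_left.mpr fun i hi hi' => ?_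
  have hle : (j + 1) * (L + 1) ≤ j' * (L + 1) := Nat.mul_le_mul_right (L + 1) h
  rw [Nat.succ_mul] at hle
  simp only [Finset.mem_Ico] at hi hi'
  omega

lemma ae_frequently_occursAt (w : List Bool) :
    ∀ᵐ X ∂mu, ∃ᶠ n in atTop, OccursAt w n X := by
  -- Blocks start at multiples of `w.length + 1`, not of `w.length`, so that their starting
  -- points tend to infinity also for the empty word.
  set E : ℕ → Set (ℕ → Bool) := fun j => {X | OccursAt w (j * (w.length + 1)) X} with hE
  simp only [setOf_occursAt_eq_pi] at hE
  have hmeas : ∀ j, MeasurableSet (E j) := fun j => by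
    rw [hE]
    exact .pi (Finset.countable_toSet _) fun _ _ => measurableSet_singleton _
  rw [mu_eq_infinitePi]
  have hindep : iIndepSet E (Measure.infinitePi fun _ => coin) := by
    rw [hE]
    exact iIndepSet_infinitePi_pi _ (pairwise_disjoint_blocks _) fun _ => measurableSet_singleton _
  have hsum : ∑' j, Measure.infinitePi (fun _ => coin) (E j) = ⊤ := by
    simp only [hE, Measure.infinitePi_pi _ fun _ _ => measurableSet_singleton _, coin_singleton,
      Finset.prod_const, Nat.card_Ico, Nat.add_sub_cancel_left]
    exact ENNReal.tsum_const_eq_top_of_ne_zero (by simp)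
  have hlimsup : ∀ᵐ X ∂(Measure.infinitePi fun _ => coin), X ∈ limsup E atTop := by
    rw [ae_mem_iff_measure_eq (MeasurableSet.measurableSet_limsup hmeas).nullMeasurableSet,
      measure_univ]
    exact measure_limsup_eq_one hmeas hindep hsum
  filter_upwards [hlimsup] with X hX
  have hmul : Tendsto (fun j => j * (w.length + 1)) atTop atTop :=
    tendsto_id.atTop_mul_const' (by omega)
  exact hmul.frequently (mem_limsup_iff_frequently_mem.mp hX)

section Automaton

variable {S : Type*} (f : S → Bool → S)

lemma act_append (s : S) (w₁ w₂ : List Bool) :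
    act f s (w₁ ++ w₂) = act f (act f s w₁) w₂ :=
  List.foldl_append

lemma reach_refl (s : S) : Reach f s s := ⟨[], rfl⟩

lemma reach_act (s : S) (w : List Bool) : Reach f s (act f s w) := ⟨w, rfl⟩

lemma Reach.trans {f : S → Bool → S} {s t u : S} (hst : Reach f s t) (htu : Reach f t u) :
    Reach f s u := by
  obtain ⟨w₁, rfl⟩ := hst
  obtain ⟨w₂, rfl⟩ := htu
  exact ⟨w₁ ++ w₂, act_append f s w₁ w₂⟩

def IsLeafState (s : S) : Prop := ∀ t, Reach f s t → Reach f t s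

variable {f}

lemma IsLeafState.of_reach {s t : S} (hs : IsLeafState f s) (hst : Reach f s t) :
    IsLeafState f t :=
  fun u htu => (hs u (hst.trans htu)).trans hst

lemma isLeafComponent_component {s : S} (hs : IsLeafState f s) :
    IsLeafComponent f (component f s) :=
  ⟨⟨s, rfl⟩, fun _ ht _ htu => (hs.of_reach ht.1) _ htu⟩

lemma IsLeafComponent.step_mem {g : Set S} (hg : IsLeafComponent f g) {s : S} (hs : s ∈ g)
    (b : Bool) : f s b ∈ g := by
  obtain ⟨⟨s₁, rfl⟩, hleaf⟩ := hg
  have hstep : Reach f s (f s b) := reach_act f s [b]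
  exact ⟨hs.1.trans hstep, (hleaf s hs _ hstep).trans hs.2⟩

lemma IsLeafComponent.act_mem {g : Set S} (hg : IsLeafComponent f g) {s : S} (hs : s ∈ g)
    (w : List Bool) : act f s w ∈ g := by
  induction w generalizing s with
  | nil => exact hs
  | cons b w ih => exact ih (hg.step_mem hs b)

lemma IsLeafComponent.reach {g : Set S} (hg : IsLeafComponent f g) {s t : S} (hs : s ∈ g)
    (ht : t ∈ g) : Reach f s t := by
  obtain ⟨⟨s₁, rfl⟩, -⟩ := hg
  exact hs.2.trans ht.1

variable (f)

lemma exists_reach_isLeafState [Finite S] (s : S) : ∃ t, Reach f s t ∧ IsLeafState f t := by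
  obtain ⟨t, hst, hmin⟩ := Set.exists_min_image {t | Reach f s t}
    (fun t => {u | Reach f t u}.ncard) (Set.toFinite _) ⟨s, reach_refl f s⟩
  refine ⟨t, hst, fun u htu => ?_⟩
  by_contra hut
  have hlt : {w | Reach f u w}.ncard < {w | Reach f t w}.ncard :=
    Set.ncard_lt_ncard ⟨fun w huw => htu.trans huw, fun h => hut (h (reach_refl f t))⟩
      (Set.toFinite _)
  exact (hmin u (hst.trans htu)).not_gt hlt

lemma exists_common_word [Finite S] {P : S → List Bool → Prop}
    (hext : ∀ s w v, P s w → P s (w ++ v))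
    (hshift : ∀ s w v, P (act f s w) v → P s (w ++ v))
    (hex : ∀ s, ∃ w, P s w) : ∃ w, ∀ s, P s w := by
  classical
  have := Fintype.ofFinite S
  suffices ∀ T : Finset S, ∃ w, ∀ s ∈ T, P s w by
    obtain ⟨w, hw⟩ := this Finset.univ
    exact ⟨w, fun s => hw s (Finset.mem_univ s)⟩
  intro T
  induction T using Finset.induction_on with
  | empty => exact ⟨[], by simp⟩
  | insert a T _ ih =>
    obtain ⟨w, hw⟩ := ih
    obtain ⟨v, hv⟩ := hex (act f a w)
    refine ⟨w ++ v, fun s hs => ?_⟩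
    rcases Finset.mem_insert.mp hs with rfl | hs
    · exact hshift s w v hv
    · exact hext s w v (hw s hs)

lemma exists_word_isLeafState_act [Finite S] :
    ∃ w, ∀ s, IsLeafState f (act f s w) :=
  exists_common_word f (fun s w v hw => by rw [act_append]; exact hw.of_reach (reach_act f _ v))
    (fun s w v hv => by rwa [act_append])
    fun s => by
      obtain ⟨_, ⟨w, rfl⟩, ht⟩ := exists_reach_isLeafState f s
      exact ⟨w, ht⟩

variable {f}

lemma IsLeafComponent.exists_word_visit [Finite S] {g : Set S} (hg : IsLeafComponent f g)
    {x : S} (hx : x ∈ g) : ∃ w, ∀ t ∈ g, ∃ p, p <+: w ∧ act f t p = x := by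
  refine exists_common_word f (P := fun t w => t ∈ g → ∃ p, p <+: w ∧ act f t p = x)
    (fun s w v hw hs => ?_) (fun s w v hv hs => ?_) fun s => ?_
  · obtain ⟨p, hp, hpx⟩ := hw hs
    exact ⟨p, hp.trans (List.prefix_append w v), hpx⟩
  · obtain ⟨p, hp, hpx⟩ := hv (hg.act_mem hs w)
    exact ⟨w ++ p, (List.prefix_append_right_inj w).mpr hp, by rw [act_append, hpx]⟩
  · by_cases hs : s ∈ g
    · obtain ⟨w, hw⟩ := hg.reach hs hx
      exact ⟨w, fun _ => ⟨w, List.prefix_rfl, hw⟩⟩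
    · exact ⟨[], fun h => absurd h hs⟩

lemma OccursAt.of_prefix {p w : List Bool} {n : ℕ} {X : ℕ → Bool} (hp : p <+: w)
    (h : OccursAt w n X) : OccursAt p n X := by
  obtain ⟨r, rfl⟩ := hp
  intro k hk
  rw [h k (by simp; omega), List.getD_append _ _ _ _ hk]

lemma run_add_length {s₀ : S} {X : ℕ → Bool} {w : List Bool} {n : ℕ} (h : OccursAt w n X) :
    run f s₀ X (n + w.length) = act f (run f s₀ X n) w := by
  induction w generalizing n with
  | nil => rfl
  | cons b w ih =>
    have hb : X n = b := by simpa using h 0 (by simp)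
    have hw : OccursAt w (n + 1) X := fun k hk => by
      simpa [Nat.add_right_comm, Nat.add_assoc] using h (k + 1) (by simp; omega)
    rw [List.length_cons, ← Nat.add_assoc, Nat.add_right_comm, ih hw]
    simp [act, run, hb]

lemma run_length_of_isPrefixOfSeq {s₀ : S} {X : ℕ → Bool} {u : List Bool}
    (h : IsPrefixOfSeq u X) : run f s₀ X u.length = act f s₀ u := by
  simpa [run] using run_add_length (s₀ := s₀) (n := 0) fun k hk => by simpa using h k hk

lemma run_mem_of_le {s₀ : S} {X : ℕ → Bool} {A : Set S} (hA : ∀ s ∈ A, ∀ b, f s b ∈ A)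
    {n m : ℕ} (hn : run f s₀ X n ∈ A) (hnm : n ≤ m) : run f s₀ X m ∈ A := by
  induction m, hnm using Nat.le_induction with
  | base => exact hn
  | succ m _ ih => exact hA _ ih (X m)

end Automaton

lemma measure_setOf_buchiAccepts_ne_zero {S : Type*} [Finite S] {f : S → Bool → S} {s₀ : S}
    {F : Set S} {g : Set S} (hg : IsLeafComponent f g) {x : S} (hxF : x ∈ F) (hxg : x ∈ g)
    (hx : Reach f s₀ x) : mu {X | BuchiAccepts f s₀ F X} ≠ 0 := by
  obtain ⟨u, rfl⟩ := hx
  obtain ⟨w, hw⟩ := hg.exists_word_visit hxg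
  have haccepts : ∀ X, IsPrefixOfSeq u X → (∃ᶠ n in atTop, OccursAt w n X) →
      BuchiAccepts f s₀ F X := by
    intro X hu hocc
    have hrun_g : ∀ n, u.length ≤ n → run f s₀ X n ∈ g := fun n =>
      run_mem_of_le (fun _ hs => hg.step_mem hs) (by rwa [run_length_of_isPrefixOfSeq hu])
    refine frequently_atTop.mpr fun N => ?_
    obtain ⟨n, hn, hn_occ⟩ := frequently_atTop.mp hocc (max N u.length)
    obtain ⟨p, hp, hpx⟩ := hw _ (hrun_g n (le_of_max_le_right hn))
    refine ⟨n + p.length, by omega, ?_⟩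
    rwa [run_add_length (hn_occ.of_prefix hp), hpx]
  have hle : mu (prefixCylinder u.length fun k => u.getD k false) ≤
      mu {X | BuchiAccepts f s₀ F X} :=
    measure_mono_ae <| by
      filter_upwards [ae_frequently_occursAt w] with X hocc hu using haccepts X hu hocc
  rw [mu_prefixCylinder] at hle
  exact (ENNReal.pow_pos (ENNReal.inv_pos.mpr ENNReal.ofNat_ne_top) _).trans_le hle |>.ne'

lemma ae_not_buchiAccepts {S : Type*} [Finite S] {f : S → Bool → S} {s₀ : S} {F : Set S}
    (hF : ∀ g : Set S, IsLeafComponent f g → F ∩ g = ∅) :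
    ∀ᵐ X ∂mu, ¬ BuchiAccepts f s₀ F X := by
  obtain ⟨w, hw⟩ := exists_word_isLeafState_act f
  have hnotF : ∀ s, IsLeafState f s → s ∉ F := fun s hs hsF =>
    (hF _ (isLeafComponent_component hs)).subset ⟨hsF, reach_refl f s, reach_refl f s⟩
  filter_upwards [ae_frequently_occursAt w] with X hocc haccepts
  obtain ⟨n, hn⟩ := hocc.exists
  obtain ⟨m, hm, hmF⟩ := frequently_atTop.mp haccepts (n + w.length)
  refine hnotF _ (run_mem_of_le (A := {s | IsLeafState f s}) ?_ ?_ hm) hmF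
  · exact fun s hs b => hs.of_reach (reach_act f s [b])
  · rw [Set.mem_ofPred_eq, run_add_length hn]
    exact hw _

/-- A deterministic Büchi automaton (with all states reachable) has
measure-zero language iff no accepting state lies in a leaf connected component. -/
theorem stmt6 {S : Type} [Fintype S] (f : S → Bool → S) (s₀ : S) (F : Set S)
    (hreach : ∀ s : S, Reach f s₀ s) :
    mu {X : ℕ → Bool | BuchiAccepts f s₀ F X} = 0 ↔
      ∀ g : Set S, IsLeafComponent f g → F ∩ g = ∅ := by
  refine ⟨fun hzero g hg => ?_,
    fun hF => measure_eq_zero_iff_ae_notMem.mpr (ae_not_buchiAccepts hF)⟩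
  by_contra hne
  obtain ⟨x, hxF, hxg⟩ := Set.nonempty_iff_ne_empty.mpr hne
  exact measure_setOf_buchiAccepts_ne_zero hg hxF hxg (hreach x) hzero
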